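/- arXiv:math/0312262 — 4 statements merged into one kernel-verified Lean document; each statement's English description precedes it below -/
import Mathlib

section
/- Let W be the class of equivalences of categories in the category Cat of small categories. Let Cat_iso be the category whose objects are small categories and whose morphisms from C to D are natural-isomorphism classes of functors C → D, and let P : Cat → Cat_iso be the quotient functor which is the identity on objects and sends a functor to its natural-isomorphism class. Then P sends every equivalence of categories to an isomorphism, and P exhibits Cat_iso as the localization of Cat with respect to W (i.e. P : Cat → Cat_iso is a localization functor at the class W of equivalences of categories). -/
/-!
STATEMENT 0: The quotient of `Cat` by natural isomorphism of functors is the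
localization of `Cat` at the class of equivalences of categories.
-/

open CategoryTheory

universe u

/-- The hom-relation on `Cat` identifying two functors when they are naturally
isomorphic. -/
def natIsoRel : HomRel Cat.{u, u} := fun {_ _} F G => Nonempty (F ≅ G)

/-- `Cat_iso`: the category whose objects are small categories and whose morphisms
are natural-isomorphism classes of functors. -/
abbrev CatIso : Type (u + 1) := CategoryTheory.Quotient natIsoRel.{u}

/-- The quotient functor `P : Cat → Cat_iso`; it is the identity on objects and
sends a functor to its natural-isomorphism class. -/
def catIsoQuotient : Cat.{u, u} ⥤ CatIso.{u} := Quotient.functor natIsoRel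

/-- The class `W` of morphisms of `Cat` that are equivalences of categories. -/
def catEquivalences : MorphismProperty Cat.{u, u} := fun _ _ F => F.toFunctor.IsEquivalence

/-- The walking isomorphism: codiscrete category on two objects. -/
def WI : Type u := ULift Bool

instance : Category.{u} WI where
  Hom _ _ := PUnit
  id _ := ⟨⟩
  comp _ _ := ⟨⟩

/-- any two objects of WI are isomorphic -/
def wIso (x y : WI) : x ≅ y := ⟨⟨⟩, ⟨⟩, rfl, rfl⟩

section
variable {D : Type u} [Category.{u} D]

lemma WI_hom_eq {x y : WI} (f g : x ⟶ y) : f = g := rfl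

def constWIEquiv (D : Type u) [Category.{u} D] : D ≌ (WI ⥤ D) where
  functor := Functor.const WI
  inverse := (evaluation WI D).obj ⟨false⟩
  unitIso := NatIso.ofComponents (fun _ => Iso.refl _) (by intros; simp; rfl)
  counitIso := NatIso.ofComponents
    (fun F => NatIso.ofComponents (fun x => F.mapIso (wIso ⟨false⟩ x))
      (by
        intro x y f
        simp only [Functor.comp_obj, Functor.comp_map, evaluation_obj_obj,
          Functor.const_obj_obj, Functor.const_obj_map, Category.id_comp,
          Functor.mapIso_hom, Functor.id_obj, Functor.id_map, ← Functor.map_comp]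
        exact F.map_comp (wIso ⟨false⟩ x).hom f))
    (by
      intro F G η
      ext x
      exact (η.naturality _).symm)
  functor_unitIso_comp := by
    intro d
    ext x
    simp [wIso]
    rfl

def pairIso {a b : D} (α : a ≅ b) : WI ⥤ D where
  obj x := bif x.down then b else a
  map {x y} _ := match x, y with
    | ⟨false⟩, ⟨false⟩ => 𝟙 a
    | ⟨false⟩, ⟨true⟩ => α.hom
    | ⟨true⟩, ⟨false⟩ => α.inv
    | ⟨true⟩, ⟨true⟩ => 𝟙 b
  map_id x := by rcases x with ⟨_ | _⟩ <;> rfl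
  map_comp {x y z} f g := by
    rcases x with ⟨_ | _⟩ <;> rcases y with ⟨_ | _⟩ <;> rcases z with ⟨_ | _⟩ <;> simp

end

def cylinder {C D : Type u} [Category.{u} C] [Category.{u} D] {F G : C ⥤ D}
    (α : F ≅ G) : C ⥤ (WI ⥤ D) where
  obj c := pairIso (α.app c)
  map {c c'} f :=
    { app := fun x => match x with
        | ⟨false⟩ => F.map f
        | ⟨true⟩ => G.map f
      naturality := by
        rintro ⟨_ | _⟩ ⟨_ | _⟩ _
        · simp [pairIso]
        · simpa [pairIso] using (α.hom.naturality f).symm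
        · simpa [pairIso] using (α.inv.naturality f).symm
        · simp [pairIso] }
  map_id c := by ext ⟨_ | _⟩ <;> simp <;> rfl
  map_comp f g := by ext ⟨_ | _⟩ <;> simp <;> rfl

section Key

variable {E : Type*} [Category E] (Φ : Cat.{u, u} ⥤ E)
  (hΦ : catEquivalences.IsInvertedBy Φ)

theorem map_eq_of_natIso (hΦ : catEquivalences.IsInvertedBy Φ)
    {C D : Cat.{u, u}} {F G : C ⟶ D} (α : F ≅ G) : Φ.map F = Φ.map G := by
  let W : Cat.{u, u} := Cat.of (WI ⥤ D)
  let e : (D : Cat.{u,u}) ⟶ W := (constWIEquiv D).functor.toCatHom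
  let s : W ⟶ D := ((evaluation WI D).obj ⟨false⟩).toCatHom
  let t : W ⟶ D := ((evaluation WI D).obj ⟨true⟩).toCatHom
  have he : catEquivalences e := (constWIEquiv D).isEquivalence_functor
  haveI : IsIso (Φ.map e) := hΦ _ he
  have hes : e ≫ s = 𝟙 (D : Cat.{u,u}) := rfl
  have het : e ≫ t = 𝟙 (D : Cat.{u,u}) := rfl
  have hs : Φ.map s = inv (Φ.map e) := by
    refine (IsIso.inv_eq_of_hom_inv_id ?_).symm
    rw [← Φ.map_comp, hes, Φ.map_id]
  have ht : Φ.map t = inv (Φ.map e) := by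
    refine (IsIso.inv_eq_of_hom_inv_id ?_).symm
    rw [← Φ.map_comp, het, Φ.map_id]
  have hst : Φ.map s = Φ.map t := hs.trans ht.symm
  let A : C ⟶ W := (cylinder (Cat.Hom.toNatIso α)).toCatHom
  have hAs : A ≫ s = F := rfl
  have hAt : A ≫ t = G := rfl
  calc Φ.map F = Φ.map A ≫ Φ.map s := by rw [← hAs, Φ.map_comp]
    _ = Φ.map A ≫ Φ.map t := by rw [hst]
    _ = Φ.map G := by rw [← Φ.map_comp, hAt]

end Key

theorem catIsoQuotient_inverts : catEquivalences.IsInvertedBy catIsoQuotient.{u} := by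
  intro C D F hF
  haveI : F.toFunctor.IsEquivalence := hF
  let e := F.toFunctor.asEquivalence
  refine ⟨catIsoQuotient.map (show (D : Cat.{u,u}) ⟶ C from e.inverse.toCatHom), ?_, ?_⟩
  · rw [← catIsoQuotient.map_comp, ← catIsoQuotient.map_id]
    exact CategoryTheory.Quotient.sound natIsoRel ⟨Cat.Hom.isoMk e.unitIso.symm⟩
  · rw [← catIsoQuotient.map_comp, ← catIsoQuotient.map_id]
    exact CategoryTheory.Quotient.sound natIsoRel ⟨Cat.Hom.isoMk e.counitIso⟩

def strictUP (E : Type*) [Category E] :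
    Localization.StrictUniversalPropertyFixedTarget catIsoQuotient.{u} catEquivalences E where
  inverts := catIsoQuotient_inverts
  lift Φ hΦ := CategoryTheory.Quotient.lift natIsoRel Φ (fun _ _ _ _ h => map_eq_of_natIso Φ hΦ h.some)
  fac Φ hΦ := CategoryTheory.Quotient.lift_spec natIsoRel Φ _
  uniq F₁ F₂ h := CategoryTheory.Quotient.lift_unique' natIsoRel F₁ F₂ h


/-- `P` inverts all equivalences of categories, and `P : Cat → Cat_iso` is a
localization of `Cat` with respect to the class of equivalences of categories. -/
theorem cat_iso_is_localization_at_equivalences :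
    (∀ {C D : Cat.{u, u}} (F : C ⟶ D), catEquivalences F → IsIso (catIsoQuotient.map F)) ∧
      catIsoQuotient.{u}.IsLocalization catEquivalences := by
  exact ⟨fun F hF => catIsoQuotient_inverts F hF,
    Functor.IsLocalization.mk' _ _ (strictUP _) (strictUP _)⟩
end

section
/- Let PrCat be the full subcategory of bisimplicial sets consisting of Segal precategories. The geometric realization functor |·| : PrCat → SSet, sending a Segal precategory A to the diagonal simplicial set [n] ↦ (A([n]))([n]) (the n-simplices of the simplicial set A([n])), admits a right adjoint Π∞ : SSet → PrCat (the fundamental Segal groupoid functor). -/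
/-!
STATEMENT 3: The geometric realization functor `|·| : PrCat → SSet` sending a Segal
precategory `A` to its diagonal simplicial set `[n] ↦ (A([n]))([n])` admits a right
adjoint `Π∞ : SSet → PrCat` (the fundamental Segal groupoid functor).
-/

open CategoryTheory Opposite

/-- A simplicial set is discrete if it is isomorphic to a constant simplicial set. -/
def SSetIsDiscrete (K : SSet.{0}) : Prop :=
  ∃ S : Type 0, Nonempty (K ≅ (Functor.const SimplexCategoryᵒᵖ).obj S)

/-- A Segal precategory is a bisimplicial set `A : Δᵒᵖ ⥤ SSet` such that `A([0])` is a
discrete simplicial set. -/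
def IsSegalPrecat (A : SimplexCategoryᵒᵖ ⥤ SSet.{0}) : Prop :=
  SSetIsDiscrete (A.obj (op (SimplexCategory.mk 0)))

/-- `PrCat`: the full subcategory of bisimplicial sets on the Segal precategories. -/
abbrev PrCat : Type 1 := ObjectProperty.FullSubcategory IsSegalPrecat

/-- The diagonal of a bisimplicial set: the simplicial set `[n] ↦ (A([n]))([n])`. -/
def diagonalFunctor : (SimplexCategoryᵒᵖ ⥤ SSet.{0}) ⥤ SSet.{0} :=
  Functor.uncurry ⋙ (Functor.whiskeringLeft SimplexCategoryᵒᵖ (SimplexCategoryᵒᵖ × SimplexCategoryᵒᵖ)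
    (Type 0)).obj (Functor.diag SimplexCategoryᵒᵖ)

/-- The geometric realization `|·| : PrCat → SSet`, sending a Segal precategory to its
diagonal simplicial set. -/
def geomRealization : PrCat ⥤ SSet.{0} :=
  ObjectProperty.ι IsSegalPrecat ⋙ diagonalFunctor

namespace GeomRealAux

open SimplexCategory

/-- `[0]` -/
abbrev Δ0 : SimplexCategory := SimplexCategory.mk 0

/-- the unique map `[n] ⟶ [0]` -/
abbrev pr (n : SimplexCategory) : n ⟶ Δ0 := SimplexCategory.const n Δ0 0

lemma to_zero_eq {n : SimplexCategory} (f g : n ⟶ Δ0) : f = g := by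
  rw [SimplexCategory.eq_const_to_zero f, SimplexCategory.eq_const_to_zero g]

lemma pr_op_comp {n n' : SimplexCategoryᵒᵖ} (g : n ⟶ n') :
    (pr n.unop).op ≫ g = (pr n'.unop).op :=
  Quiver.Hom.unop_inj (to_zero_eq _ _)

/-- Every simplex of a discrete simplicial set is a degeneracy of a `0`-simplex. -/
lemma discrete_surj {K : SSet.{0}} (hK : SSetIsDiscrete K) (n : SimplexCategoryᵒᵖ)
    (z : K.obj n) : ∃ z₀ : K.obj (op Δ0), K.map (pr n.unop).op z₀ = z := by
  obtain ⟨S, ⟨e⟩⟩ := hK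
  refine ⟨e.inv.app (op Δ0) (e.hom.app n z), ?_⟩
  have h1 := NatTrans.naturality_apply e.inv ((pr n.unop).op :
    (op Δ0 : SimplexCategoryᵒᵖ) ⟶ n) (e.hom.app n z)
  simp only [types_comp_apply, Functor.const_obj_map, types_id_apply] at h1
  rw [← h1]
  exact Iso.hom_inv_id_app_apply e n z

variable (B : SimplexCategoryᵒᵖ ⥤ SSet.{0})

/-- The subpresheaf of `B([m])` of simplices all of whose first-direction vertices are
degenerate. -/
def coreSub (m : SimplexCategory) : Subfunctor (B.obj (op m)) where
  obj n := {x | ∀ v : Δ0 ⟶ m, ∃ y : (B.obj (op Δ0)).obj (op Δ0),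
    (B.obj (op Δ0)).map (pr n.unop).op y = (B.map v.op).app n x}
  map {n n'} g := by
    intro x hx v
    obtain ⟨y, hy⟩ := hx v
    refine ⟨y, ?_⟩
    rw [← pr_op_comp g, FunctorToTypes.map_comp_apply, hy]
    exact (NatTrans.naturality_apply (B.map v.op) g x).symm

/-- The coreflection of a bisimplicial set into Segal precategories. -/
def coreObj : SimplexCategoryᵒᵖ ⥤ SSet.{0} where
  obj m := (coreSub B m.unop).toFunctor
  map {m m'} f := Subfunctor.lift ((coreSub B m.unop).ι ≫ B.map f) (by
    rintro n _ ⟨x, rfl⟩ v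
    obtain ⟨y, hy⟩ := x.prop (v ≫ f.unop)
    refine ⟨y, ?_⟩
    rw [hy]
    have : (v ≫ f.unop).op = f ≫ v.op := rfl
    rw [this, B.map_comp]
    rfl)
  map_id m := by
    apply NatTrans.ext; funext n; ext x
    apply Subtype.ext
    show (B.map (𝟙 m)).app n x.val = x.val
    rw [B.map_id]; rfl
  map_comp {m m' m''} f g := by
    apply NatTrans.ext; funext n; ext x
    apply Subtype.ext
    show (B.map (f ≫ g)).app n x.val = _
    rw [B.map_comp]; rfl

/-- The inclusion of the coreflection. -/
def coreι : coreObj B ⟶ B where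
  app m := (coreSub B m.unop).ι
  naturality {m m'} f := by rfl

lemma coreObj_isSegal : IsSegalPrecat (coreObj B) := by
  refine ⟨(B.obj (op Δ0)).obj (op Δ0), ⟨?_⟩⟩
  refine (NatIso.ofComponents (fun n => Equiv.toIso ?_) ?_).symm
  · -- equiv from S to the subtype
    refine ⟨fun y => ⟨(B.obj (op Δ0)).map (pr n.unop).op y, ?_⟩,
      fun x => (B.obj (op Δ0)).map (SimplexCategory.const Δ0 n.unop 0).op x.val, ?_, ?_⟩
    · intro v
      obtain rfl : v = 𝟙 Δ0 := to_zero_eq _ _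
      exact ⟨y, by rw [op_id, B.map_id]; rfl⟩
    · intro y
      show (B.obj (op Δ0)).map (SimplexCategory.const Δ0 n.unop 0).op
        ((B.obj (op Δ0)).map (pr n.unop).op y) = y
      rw [← FunctorToTypes.map_comp_apply]
      have : ((pr n.unop).op ≫ (SimplexCategory.const Δ0 n.unop 0).op :
          (op Δ0 : SimplexCategoryᵒᵖ) ⟶ op Δ0) = 𝟙 _ := by
        rw [← op_comp]
        have : (SimplexCategory.const Δ0 n.unop 0 ≫ pr n.unop : Δ0 ⟶ Δ0) = 𝟙 Δ0 :=
          to_zero_eq _ _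
        rw [this, op_id]
      rw [this, FunctorToTypes.map_id_apply]
    · intro x
      apply Subtype.ext
      obtain ⟨y, hy⟩ := x.prop (𝟙 Δ0)
      have hy' : (B.obj (op Δ0)).map (pr n.unop).op y = x.val := by
        rw [hy, op_id, B.map_id]; rfl
      show (B.obj (op Δ0)).map (pr n.unop).op
        ((B.obj (op Δ0)).map (SimplexCategory.const Δ0 n.unop 0).op x.val) = x.val
      have h2 : ((pr n.unop).op ≫ (SimplexCategory.const Δ0 n.unop 0).op :
          (op Δ0 : SimplexCategoryᵒᵖ) ⟶ op Δ0) = 𝟙 _ := by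
        rw [← op_comp]
        have h3 : (SimplexCategory.const Δ0 n.unop 0 ≫ pr n.unop : Δ0 ⟶ Δ0) = 𝟙 Δ0 :=
          to_zero_eq _ _
        rw [h3, op_id]
      rw [← hy', ← FunctorToTypes.map_comp_apply, ← FunctorToTypes.map_comp_apply,
        ← Category.assoc, h2, Category.id_comp]
  · intro n n' g
    ext y
    apply Subtype.ext
    show (B.obj (op Δ0)).map (pr n'.unop).op y
      = (B.obj (op Δ0)).map g ((B.obj (op Δ0)).map (pr n.unop).op y)
    rw [← FunctorToTypes.map_comp_apply, pr_op_comp]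

/-- The coreflection functor from bisimplicial sets to `PrCat`. -/
def coreFunctor : (SimplexCategoryᵒᵖ ⥤ SSet.{0}) ⥤ PrCat where
  obj B := ⟨coreObj B, coreObj_isSegal B⟩
  map {B B'} φ := ObjectProperty.homMk
    { app := fun m => Subfunctor.lift ((coreSub B m.unop).ι ≫ φ.app m) (by
        rintro n _ ⟨x, rfl⟩ v
        obtain ⟨y, hy⟩ := x.prop v
        refine ⟨(φ.app (op Δ0)).app (op Δ0) y, ?_⟩
        refine (NatTrans.naturality_apply (φ.app (op Δ0)) (pr n.unop).op y).symm.trans ?_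
        rw [hy]
        exact ConcreteCategory.congr_hom (congr_app (φ.naturality (v.op : op m.unop ⟶ op Δ0)) n) x.val)
      naturality := fun {m m'} f => by
        apply NatTrans.ext; funext n; ext x
        apply Subtype.ext
        exact ConcreteCategory.congr_hom (congr_app (φ.naturality f) n) x.val }
  map_id B := by
    apply ObjectProperty.hom_ext
    apply NatTrans.ext; funext m
    apply NatTrans.ext; funext n; ext x
    apply Subtype.ext
    rfl
  map_comp {B B' B''} φ ψ := by
    apply ObjectProperty.hom_ext
    apply NatTrans.ext; funext m
    apply NatTrans.ext; funext n; ext x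
    apply Subtype.ext
    rfl

/-- The coreflection adjunction. -/
def coreAdjunction : ObjectProperty.ι IsSegalPrecat ⊣ coreFunctor :=
  Adjunction.mkOfHomEquiv
    { homEquiv := fun A B =>
        { toFun := fun φ => ObjectProperty.homMk
            { app := fun m => Subfunctor.lift (φ.app m) (by
                rintro n _ ⟨x, rfl⟩ v
                obtain ⟨z₀, hz₀⟩ := discrete_surj A.2 n ((A.1.map v.op).app n x)
                refine ⟨(φ.app (op Δ0)).app (op Δ0) z₀, ?_⟩
                refine (NatTrans.naturality_apply (φ.app (op Δ0))
                  (pr n.unop).op z₀).symm.trans ?_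
                have hz₀' : (((ObjectProperty.ι IsSegalPrecat).obj A).obj
                    (op Δ0)).map (pr n.unop).op z₀ = (A.obj.map v.op).app n x := hz₀
                rw [hz₀']
                exact ConcreteCategory.congr_hom (congr_app (φ.naturality (v.op : op m.unop ⟶ op Δ0)) n) x)
              naturality := fun {m m'} f => by
                apply NatTrans.ext; funext n; ext x
                apply Subtype.ext
                exact ConcreteCategory.congr_hom (congr_app (φ.naturality f) n) x }
          invFun := fun ψ => ψ.hom ≫ coreι B
          left_inv := fun φ => by
            apply NatTrans.ext; funext m
            apply NatTrans.ext; funext n; ext x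
            rfl
          right_inv := fun ψ => by
            apply ObjectProperty.hom_ext
            apply NatTrans.ext; funext m
            apply NatTrans.ext; funext n; ext x
            apply Subtype.ext
            rfl }
      homEquiv_naturality_left_symm := fun {A' A B} f g => by
        apply NatTrans.ext; funext m
        apply NatTrans.ext; funext n; ext x
        rfl
      homEquiv_naturality_right := fun {A B B'} φ g => by
        apply ObjectProperty.hom_ext
        apply NatTrans.ext; funext m
        apply NatTrans.ext; funext n; ext x
        apply Subtype.ext
        rfl }

/-- A right adjoint to the diagonal functor on bisimplicial sets. -/
noncomputable def diagRight : SSet.{0} ⥤ (SimplexCategoryᵒᵖ ⥤ SSet.{0}) :=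
  (Functor.diag SimplexCategoryᵒᵖ).ran ⋙ Functor.curry

/-- The adjunction between the diagonal and its right adjoint. -/
noncomputable def diagAdjunction : diagonalFunctor ⊣ diagRight :=
  Functor.currying.toAdjunction.comp ((Functor.diag SimplexCategoryᵒᵖ).ranAdjunction (Type 0))

end GeomRealAux

open GeomRealAux in
/-- The geometric realization functor `|·| : PrCat → SSet` admits a right adjoint
`Π∞ : SSet → PrCat`, the fundamental Segal groupoid functor. -/
theorem geomRealization_has_right_adjoint :
    ∃ Pinf : SSet.{0} ⥤ PrCat, Nonempty (geomRealization ⊣ Pinf) :=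
  ⟨diagRight ⋙ coreFunctor, ⟨coreAdjunction.comp diagAdjunction⟩⟩
end

section
/- Let PrCat be the full subcategory of bisimplicial sets consisting of Segal precategories. For m ≥ 0, let I̅(m) be the groupoid with objects 0,…,m and exactly one morphism between any two objects, let N(I̅(m)) be its nerve, and let D(m) ∈ PrCat be the bisimplicial set whose value at [p] is the constant (discrete) simplicial set on the set of p-simplices of N(I̅(m)). Define a functor φ : PrCat → (bisimplicial sets) by setting, for a Segal precategory A, φ(A)([n]) to be the simplicial set [m] ↦ Hom_PrCat(h_n × D(m), A), with the evident functoriality in [n] and [m]. Then φ admits a left adjoint ψ : (bisimplicial sets) → PrCat. -/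
open CategoryTheory Opposite Limits

/-- The functor sending a simplicial set `K` to the bisimplicial set whose value at `[p]`
is the constant (discrete) simplicial set on the set of `p`-simplices of `K`. -/
def levelConst : SSet.{0} ⥤ (SimplexCategoryᵒᵖ ⥤ SSet.{0}) :=
  (Functor.whiskeringRight SimplexCategoryᵒᵖ (Type 0) SSet.{0}).obj
    (Functor.const SimplexCategoryᵒᵖ)

/-- The functor `[n] ↦ h_n`, where `h_n` is the bisimplicial set whose value at `[p]`
is the constant simplicial set on `Δ([p], [n])`. -/
def hFunctor : SimplexCategory ⥤ (SimplexCategoryᵒᵖ ⥤ SSet.{0}) :=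
  yoneda ⋙ levelConst

/-- The groupoid `I̅(m)` with objects `0, …, m` and exactly one morphism between
any two objects. -/
def Chaotic (m : SimplexCategory) : Type := Fin (m.len + 1)

instance (m : SimplexCategory) : Category (Chaotic m) where
  Hom _ _ := PUnit
  id _ := PUnit.unit
  comp _ _ := PUnit.unit

/-- The functor `[m] ↦ I̅(m)` from the simplex category to `Cat`. -/
def chaoticFunctor : SimplexCategory ⥤ Cat.{0, 0} where
  obj m := Cat.of (Chaotic m)
  map {m m'} f :=
    { toFunctor :=
      { obj := fun i => f.toOrderHom i
        map := fun _ => PUnit.unit } }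
  map_id _ := rfl
  map_comp _ _ := rfl

/-- The functor `[m] ↦ D(m)`, where `D(m)` is the bisimplicial set whose value at `[p]`
is the constant simplicial set on the set of `p`-simplices of the nerve `N(I̅(m))`. -/
def DFunctor : SimplexCategory ⥤ (SimplexCategoryᵒᵖ ⥤ SSet.{0}) :=
  chaoticFunctor ⋙ nerveFunctor.{0, 0} ⋙ levelConst

/-- The bifunctor `([n], [m]) ↦ h_n × D(m)` (product of bisimplicial sets, computed
levelwise). -/
noncomputable def hDProd :
    SimplexCategory × SimplexCategory ⥤ (SimplexCategoryᵒᵖ ⥤ SSet.{0}) :=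
  (hFunctor.prod DFunctor) ⋙ Functor.uncurry.obj Limits.prod.functor

/-- The functor `φ : PrCat ⥤ (bisimplicial sets)` sending a Segal precategory `A` to the
bisimplicial set `[n] ↦ ([m] ↦ Hom(h_n × D(m), A))`, with its evident functoriality. -/
noncomputable def phiCSS : PrCat ⥤ (SimplexCategoryᵒᵖ ⥤ SSet.{0}) :=
  ObjectProperty.ι IsSegalPrecat ⋙ yoneda ⋙
    (Functor.whiskeringLeft (SimplexCategoryᵒᵖ × SimplexCategoryᵒᵖ)
      (SimplexCategoryᵒᵖ ⥤ SSet.{0})ᵒᵖ (Type 0)).obj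
      ((prodOpEquiv SimplexCategory (D := SimplexCategory)).inverse ⋙ hDProd.op) ⋙
    Functor.curry




namespace PhiAux

abbrev constF : Type 0 ⥤ SSet.{0} := Functor.const SimplexCategoryᵒᵖ

noncomputable abbrev ev0S : SSet.{0} ⥤ Type 0 :=
  (evaluation SimplexCategoryᵒᵖ (Type 0)).obj (op (SimplexCategory.mk 0))

/-- the unique map `[0] ⟶ [n]` in `Δᵒᵖ`. -/
def toZero (n : SimplexCategoryᵒᵖ) : op (SimplexCategory.mk 0) ⟶ n :=
  (SimplexCategory.const n.unop (SimplexCategory.mk 0) 0).op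

lemma toZero_comp {n n' : SimplexCategoryᵒᵖ} (g : n ⟶ n') : toZero n ≫ g = toZero n' := by
  apply Quiver.Hom.unop_inj
  apply SimplexCategory.Hom.ext
  ext i : 2
  exact Subsingleton.elim (α := Fin 1) _ _

def theta : ev0S ⋙ constF ⟶ 𝟭 SSet.{0} where
  app K :=
    { app := fun n => K.map (toZero n)
      naturality := fun n n' g => by
        dsimp
        rw [← K.map_comp, toZero_comp]
        rfl }
  naturality := fun K L f => by
    refine NatTrans.ext (funext fun n => ?_)
    exact (f.naturality (toZero n)).symm

lemma isIso_theta_app (K : SSet.{0}) (h : ∃ S : Type 0,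
    Nonempty (K ≅ (Functor.const SimplexCategoryᵒᵖ).obj S)) : IsIso (theta.app K) := by
  obtain ⟨S, ⟨φ⟩⟩ := h
  have : ∀ n, IsIso ((theta.app K).app n) := by
    intro n
    have h1 : (theta.app K).app n =
        φ.hom.app (op (SimplexCategory.mk 0)) ≫ φ.inv.app n := by
      have h2 := φ.hom.naturality (toZero n)
      dsimp [theta] at h2 ⊢
      rw [← Category.comp_id (K.map (toZero n)), ← φ.hom_inv_id_app n, ← Category.assoc, h2]
      simp
    rw [h1]
    infer_instance
  exact NatIso.isIso_of_isIso_app _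



lemma closedSegal' (J : Type 0) [SmallCategory J]
    (F : J ⥤ (SimplexCategoryᵒᵖ ⥤ SSet.{0})) (c : Cocone F) (hc : IsColimit c)
    (hF : ∀ j, IsSegalPrecat (F.obj j)) : IsSegalPrecat c.pt := by
  let ev0 : (SimplexCategoryᵒᵖ ⥤ SSet.{0}) ⥤ SSet.{0} :=
    (evaluation SimplexCategoryᵒᵖ SSet.{0}).obj (op (SimplexCategory.mk 0))
  have hc' : IsColimit (ev0.mapCocone c) := isColimitOfPreserves ev0 hc
  let F0 : J ⥤ SSet.{0} := F ⋙ ev0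
  haveI : ∀ j, IsIso ((Functor.whiskerLeft F0 theta).app j) := fun j => isIso_theta_app _ (hF j)
  haveI : IsIso (Functor.whiskerLeft F0 theta) := NatIso.isIso_of_isIso_app _
  let T : J ⥤ Type 0 := F0 ⋙ ev0S
  haveI : PreservesColimits constF := constLimAdj.leftAdjoint_preservesColimits
  have e1 : T ⋙ constF ≅ F0 := asIso (Functor.whiskerLeft F0 theta)
  refine ⟨colimit T, ⟨?_⟩⟩
  exact (hc'.coconePointUniqueUpToIso (colimit.isColimit F0)) ≪≫
    (HasColimit.isoOfNatIso e1.symm) ≪≫ (preservesColimitIso constF T).symm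

lemma closedSegal (J : Type 0) [SmallCategory J] :
    ObjectProperty.IsClosedUnderColimitsOfShape IsSegalPrecat J :=
  ⟨fun _ ⟨h⟩ => closedSegal' J h.diag _ h.isColimit h.prop_diag_obj⟩

noncomputable instance : HasColimits PrCat :=
  { has_colimits_of_shape := fun J _ =>
      haveI := closedSegal J
      hasColimitsOfShape_of_closedUnderColimits J IsSegalPrecat }

lemma isSegal_hDProd (x : SimplexCategory × SimplexCategory) :
    IsSegalPrecat (hDProd.obj x) := by
  obtain ⟨n, m⟩ := x
  haveI : PreservesLimits constF := colimConstAdj.rightAdjoint_preservesLimits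
  let S : Type 0 := (yoneda.obj n).obj (op (SimplexCategory.mk 0))
  let T : Type 0 := (nerveFunctor.{0,0}.obj (chaoticFunctor.obj m)).obj (op (SimplexCategory.mk 0))
  let ev0B : (SimplexCategoryᵒᵖ ⥤ SSet.{0}) ⥤ SSet.{0} :=
    (evaluation SimplexCategoryᵒᵖ SSet.{0}).obj (op (SimplexCategory.mk 0))
  refine ⟨S ⨯ T, ⟨?_⟩⟩
  change ev0B.obj (hFunctor.obj n ⨯ DFunctor.obj m) ≅ constF.obj (S ⨯ T)
  exact (PreservesLimitPair.iso ev0B (hFunctor.obj n) (DFunctor.obj m)) ≪≫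
    (PreservesLimitPair.iso constF S T).symm

noncomputable def hDProdP : SimplexCategory × SimplexCategory ⥤ PrCat :=
  ObjectProperty.lift _ hDProd isSegal_hDProd

end PhiAux

/-- The functor `φ : PrCat → (bisimplicial sets)` admits a left adjoint
`ψ : (bisimplicial sets) → PrCat`. -/
theorem phiCSS_has_left_adjoint :
    ∃ ψ : (SimplexCategoryᵒᵖ ⥤ SSet.{0}) ⥤ PrCat, Nonempty (ψ ⊣ phiCSS) := by
  let adj1 := Presheaf.uliftYonedaAdjunction.{0} (uliftYoneda.{0}.leftKanExtension PhiAux.hDProdP)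
    (uliftYoneda.{0}.leftKanExtensionUnit PhiAux.hDProdP)
  let e := (prodOpEquiv SimplexCategory (D := SimplexCategory))
  let adj2 := (e.congrLeft (E := Type 0)).symm.toAdjunction
  let adj3 := (Functor.currying (C := SimplexCategoryᵒᵖ) (D := SimplexCategoryᵒᵖ) (E := Type 0)).toAdjunction
  let adjT := (adj3.comp adj2).comp adj1
  let I1 : uliftYoneda.{0} (C := PrCat) ⋙ (Functor.whiskeringLeft _ _ (Type 0)).obj
      PhiAux.hDProdP.op ≅ ObjectProperty.ι IsSegalPrecat ⋙ yoneda ⋙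
      (Functor.whiskeringLeft _ _ (Type 0)).obj hDProd.op :=
    Functor.isoWhiskerRight
      (ObjectProperty.fullyFaithfulι IsSegalPrecat).compUliftYonedaCompWhiskeringLeft.symm _ ≪≫
    Functor.isoWhiskerLeft (ObjectProperty.ι IsSegalPrecat)
      (Functor.isoWhiskerRight uliftYonedaIsoYoneda.{0}
        ((Functor.whiskeringLeft (SimplexCategory × SimplexCategory)ᵒᵖ
          (SimplexCategoryᵒᵖ ⥤ SSet.{0})ᵒᵖ (Type 0)).obj hDProd.op))
  have h3 : (ObjectProperty.ι IsSegalPrecat ⋙ yoneda ⋙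
      (Functor.whiskeringLeft _ _ (Type 0)).obj hDProd.op) ⋙
      (e.congrLeft.symm.inverse ⋙ (Functor.currying (C := SimplexCategoryᵒᵖ)
      (D := SimplexCategoryᵒᵖ) (E := Type 0)).inverse) = phiCSS := rfl
  exact ⟨_, ⟨adjT.ofNatIsoRight (Functor.isoWhiskerRight I1
    (e.congrLeft.symm.inverse ⋙ (Functor.currying (C := SimplexCategoryᵒᵖ)
      (D := SimplexCategoryᵒᵖ) (E := Type 0)).inverse) ≪≫ eqToIso h3)⟩⟩
end

section
/- Let C be a category with a zero object 0 and with pushouts, and let Σ : C → C be the suspension functor sending an object x to a chosen pushout of the span 0 ← x → 0 (both legs being the unique maps to the terminal object 0), with its canonical functoriality. If Σ is an equivalence of categories, then C is equivalent to the terminal category (the category with exactly one object and only its identity morphism). In other words, an ordinary category satisfying the stability axioms — existence of finite limits and colimits, coincidence of the initial and final objects, and invertibility of the suspension functor — is trivial. -/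
/-!
STATEMENT 7: An ordinary category with a zero object and pushouts whose suspension
functor `Σ : x ↦ 0 ⊔ₓ 0` is an equivalence is equivalent to the terminal category.
-/

open CategoryTheory Limits

universe v u

variable {C : Type u} [Category.{v} C] [HasPushouts C]

/-- The suspension functor of a category with a terminal object `Z` and pushouts:
it sends an object `x` to the pushout of the span `Z ← x → Z` (both legs being the
unique morphisms to the terminal object), with its canonical functoriality. -/
noncomputable def suspension (Z : C) (hT : IsTerminal Z) : C ⥤ C where
  obj x := pushout (hT.from x) (hT.from x)
  map {x y} f :=
    pushout.map (hT.from x) (hT.from x) (hT.from y) (hT.from y) (𝟙 Z) (𝟙 Z) f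
      (hT.hom_ext _ _) (hT.hom_ext _ _)
  map_id x := by
    apply pushout.hom_ext <;> simp
  map_comp f g := by
    rw [pushout.map_comp]; simp

/-- If `C` has a zero object `Z` (an object which is both initial and terminal) and
pushouts, and the suspension functor `Σ : C ⥤ C` is an equivalence of categories, then
`C` is equivalent to the terminal category. -/
theorem equiv_terminal_of_suspension_isEquivalence
    (Z : C) (hI : IsInitial Z) (hT : IsTerminal Z)
    (h : (suspension Z hT).IsEquivalence) :
    Nonempty (C ≌ Discrete PUnit) := by
  -- Every suspension is initial: since `Z` is initial, cocones under the span
  -- `Z ← x → Z` with vertex `W` are unique, so the pushout is `Z`.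
  have hsusp : ∀ x : C, IsInitial ((suspension Z hT).obj x) := by
    intro x
    refine hI.ofIso ?_
    refine ⟨pushout.inl _ _, pushout.desc (𝟙 Z) (𝟙 Z) rfl, ?_, ?_⟩
    · exact hI.hom_ext _ _
    · show (pushout.desc (𝟙 Z) (𝟙 Z) rfl ≫ pushout.inl _ _ :
          pushout (hT.from x) (hT.from x) ⟶ _) = 𝟙 _
      apply pushout.hom_ext
      · exact hI.hom_ext _ _
      · simp
        exact hI.hom_ext _ _
  -- Since `Σ` is essentially surjective, every object is initial.
  have hin : ∀ y : C, IsInitial y := fun y =>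
    (hsusp ((suspension Z hT).asEquivalence.inverse.obj y)).ofIso
      ((suspension Z hT).asEquivalence.counitIso.app y)
  refine ⟨CategoryTheory.Equivalence.mk (Functor.star C) ((Functor.const _).obj Z) ?_ ?_⟩
  · exact NatIso.ofComponents (fun x => (hin x).uniqueUpToIso hI)
      (fun f => hT.hom_ext _ _)
  · exact Functor.punitExt _ _
end
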